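/- Let ρ be a finite positive Borel measure on the unit circle whose closed support is not all of 𝕋. Then there exist constants C > 0 and c > 0 such that for all n ≥ 1, the distance in L²(ρ) from the constant function 1 to the set of polynomials of degree at most n vanishing at 0 is at most C·e^{-cn}. -/

import Mathlib

open MeasureTheory

/-- `eN ρ n` : the distance in `L²(ρ)` from the constant `1` to the set of
polynomials of degree at most `n` vanishing at `0`. -/
noncomputable def eN (ρ : Measure ℂ) (n : ℕ) : ℝ :=
  sInf {r : ℝ | ∃ Q : Polynomial ℂ, Q.natDegree ≤ n ∧ Q.eval 0 = 0 ∧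
    r = (∫ z, ‖(1 : ℂ) - Q.eval z‖ ^ 2 ∂ρ) ^ (1 / 2 : ℝ)}

/-!
Rotate the gap in the support to an arc around `1`, so that `ρ` lives on the arc
`{‖z‖ = 1, re z ≤ m}` for some `m < 1`. On that arc the Chebyshev-type polynomials
`S₀ = (z² - (m - 1) z + 1) / (m + 1)`, `S_{k+1} = 2 S_k² - z^{2^{k+1}}` have the form
`z^{2^k} τ` with `τ ∈ [-1, 1]` (the recursion is `T₂(τ) = 2τ² - 1` in disguise), while
`S_k(0) = (1/2) (2 / (m + 1))^{2^k}` grows without bound. Normalising a suitable `S_N`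
gives a polynomial `P` with `P(0) = 1` and `|P| ≤ r < 1` on the support of `ρ`, and then
`1 - P^j`, with `j = ⌊n / (deg P + 1)⌋`, vanishes at `0` and is `r^j`-close to `1` in `L²(ρ)`.
-/

open Polynomial

lemma eN_le_of_ae_norm_le (ρ : Measure ℂ) [IsFiniteMeasure ρ] {n : ℕ} {Q : ℂ[X]}
    (hdeg : Q.natDegree ≤ n) (h0 : Q.eval 0 = 0) {M : ℝ} (hM0 : 0 ≤ M)
    (hM : ∀ᵐ z ∂ρ, ‖1 - Q.eval z‖ ≤ M) :
    eN ρ n ≤ M * Real.sqrt (ρ.real Set.univ) := by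
  have hbdd : BddBelow {r : ℝ | ∃ Q : ℂ[X], Q.natDegree ≤ n ∧ Q.eval 0 = 0 ∧
      r = (∫ z, ‖(1 : ℂ) - Q.eval z‖ ^ 2 ∂ρ) ^ (1 / 2 : ℝ)} := by
    refine ⟨0, ?_⟩
    rintro r ⟨Q', -, -, rfl⟩
    exact Real.rpow_nonneg (integral_nonneg fun z => by positivity) _
  have hsq : ∀ᵐ z ∂ρ, ‖‖1 - Q.eval z‖ ^ 2‖ ≤ M ^ 2 := by
    filter_upwards [hM] with z hz
    rw [norm_pow, norm_norm]
    exact pow_le_pow_left₀ (norm_nonneg _) hz 2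
  have hint : ∫ z, ‖1 - Q.eval z‖ ^ 2 ∂ρ ≤ M ^ 2 * ρ.real Set.univ :=
    (Real.le_norm_self _).trans (norm_integral_le_of_norm_le_const hsq)
  calc eN ρ n ≤ (∫ z, ‖1 - Q.eval z‖ ^ 2 ∂ρ) ^ (1 / 2 : ℝ) :=
        csInf_le hbdd ⟨Q, hdeg, h0, rfl⟩
    _ = Real.sqrt (∫ z, ‖1 - Q.eval z‖ ^ 2 ∂ρ) := (Real.sqrt_eq_rpow _).symm
    _ ≤ Real.sqrt (M ^ 2 * ρ.real Set.univ) := Real.sqrt_le_sqrt hint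
    _ = M * Real.sqrt (ρ.real Set.univ) := by
      rw [Real.sqrt_mul (sq_nonneg M), Real.sqrt_sq hM0]

lemma pow_div_le_inv_mul_exp {r : ℝ} (hr0 : 0 < r) (hr1 : r ≤ 1) {D : ℕ} (hD : 0 < D)
    (n : ℕ) : r ^ (n / D) ≤ r⁻¹ * Real.exp (Real.log r / D * n) := by
  have hlog : Real.log r ≤ 0 := Real.log_nonpos hr0.le hr1
  have hfloor : (n : ℝ) / D - 1 ≤ (n / D : ℕ) := by
    rw [sub_le_iff_le_add, div_le_iff₀ (by exact_mod_cast hD)]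
    exact_mod_cast (Nat.lt_div_mul_add hD).le.trans_eq (by ring)
  calc r ^ (n / D) = Real.exp (Real.log r * (n / D : ℕ)) := by
        rw [← Real.rpow_natCast, Real.rpow_def_of_pos hr0]
    _ ≤ Real.exp (Real.log r * ((n : ℝ) / D - 1)) :=
        Real.exp_le_exp.mpr (mul_le_mul_of_nonpos_left hfloor hlog)
    _ = r⁻¹ * Real.exp (Real.log r / D * n) := by
        rw [← Real.exp_log (inv_pos.mpr hr0), ← Real.exp_add, Real.log_inv]
        ring_nf

lemma exists_exp_bound_eN_of_ae_norm_le (ρ : Measure ℂ) [IsFiniteMeasure ρ] {P : ℂ[X]}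
    (hP0 : P.eval 0 = 1) {r : ℝ} (hr0 : 0 < r) (hr1 : r < 1)
    (hP : ∀ᵐ z ∂ρ, ‖P.eval z‖ ≤ r) :
    ∃ C > 0, ∃ c > 0, ∀ n : ℕ, eN ρ n ≤ C * Real.exp (-c * n) := by
  set D := P.natDegree + 1
  have hD : 0 < D := Nat.succ_pos _
  have hsqrt := Real.sqrt_nonneg (ρ.real Set.univ)
  refine ⟨r⁻¹ * (Real.sqrt (ρ.real Set.univ) + 1), by positivity,
    -Real.log r / D, div_pos (neg_pos.mpr (Real.log_neg hr0 hr1)) (by positivity), fun n => ?_⟩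
  set j := n / D
  have hdeg : (1 - P ^ j).natDegree ≤ n := by
    refine (natDegree_sub_le _ _).trans (max_le (by simp) (natDegree_pow_le.trans ?_))
    calc j * P.natDegree ≤ j * D := Nat.mul_le_mul_left _ (Nat.le_succ _)
      _ ≤ n := Nat.div_mul_le_self n D
  have hbound : ∀ᵐ z ∂ρ, ‖1 - (1 - P ^ j).eval z‖ ≤ r ^ j := by
    filter_upwards [hP] with z hz
    simpa using pow_le_pow_left₀ (norm_nonneg _) hz j
  calc eN ρ n ≤ r ^ j * Real.sqrt (ρ.real Set.univ) :=
        eN_le_of_ae_norm_le ρ hdeg (by simp [hP0]) (by positivity) hbound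
    _ ≤ r⁻¹ * Real.exp (Real.log r / D * n) * Real.sqrt (ρ.real Set.univ) :=
        mul_le_mul_of_nonneg_right (pow_div_le_inv_mul_exp hr0 hr1.le hD n) hsqrt
    _ ≤ r⁻¹ * (Real.sqrt (ρ.real Set.univ) + 1) * Real.exp (-(-Real.log r / D) * n) := by
        rw [neg_div, neg_neg, mul_right_comm]
        gcongr
        linarith

lemma re_le_of_le_norm_sub_one {u : ℂ} (hu : ‖u‖ = 1) {ε : ℝ} (hε : 0 ≤ ε)
    (hdist : ε ≤ ‖u - 1‖) : u.re ≤ 1 - ε ^ 2 / 2 := by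
  have hsq : ‖u - 1‖ ^ 2 = 2 - 2 * u.re := by
    have h1 := Complex.sq_norm u
    rw [Complex.normSq_apply, hu] at h1
    rw [Complex.sq_norm, Complex.normSq_apply]
    simp only [Complex.sub_re, Complex.sub_im, Complex.one_re, Complex.one_im, sub_zero]
    linear_combination -h1
  nlinarith [pow_le_pow_left₀ hε hdist 2]

lemma sq_add_one_eq_two_re_mul {z : ℂ} (hz : ‖z‖ = 1) : z ^ 2 + 1 = 2 * z.re * z := by
  have hconj : z * (starRingEnd ℂ) z = 1 := by
    rw [Complex.mul_conj, Complex.normSq_eq_norm_sq, hz]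
    norm_num
  calc z ^ 2 + 1 = z * (z + (starRingEnd ℂ) z) := by rw [mul_add, hconj]; ring
    _ = 2 * z.re * z := by rw [Complex.add_conj]; push_cast; ring

noncomputable def arcPoly (m : ℝ) : ℕ → ℂ[X]
  | 0 => C ((m : ℂ) + 1)⁻¹ * (X ^ 2 - C ((m : ℂ) - 1) * X + 1)
  | k + 1 => C 2 * arcPoly m k ^ 2 - X ^ 2 ^ (k + 1)

namespace arcPoly

lemma eval_zero (m : ℝ) (k : ℕ) :
    (arcPoly m k).eval 0 = ((1 / 2 * (2 / (m + 1)) ^ 2 ^ k : ℝ) : ℂ) := by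
  induction k with
  | zero => simp [arcPoly, div_eq_mul_inv]
  | succ k ih =>
    simp only [arcPoly, eval_sub, eval_mul, eval_pow, eval_C, eval_X, ih,
      zero_pow (pow_ne_zero _ two_ne_zero)]
    push_cast
    ring

lemma exists_eval_eq_pow_mul_real {m : ℝ} (hm : -1 < m) {z : ℂ} (hz : ‖z‖ = 1)
    (hre : z.re ≤ m) (k : ℕ) :
    ∃ τ : ℝ, |τ| ≤ 1 ∧ (arcPoly m k).eval z = z ^ 2 ^ k * τ := by
  have hm1 : 0 < m + 1 := by linarith
  induction k with
  | zero =>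
    have hre' : -1 ≤ z.re := by
      have := Complex.abs_re_le_norm z
      rw [hz] at this
      exact (abs_le.mp this).1
    refine ⟨(2 * z.re - m + 1) / (m + 1), ?_, ?_⟩
    · rw [abs_div, abs_of_pos hm1, div_le_one hm1, abs_le]
      constructor <;> linarith
    · have hne : (m : ℂ) + 1 ≠ 0 := by exact_mod_cast hm1.ne'
      simp only [arcPoly, eval_mul, eval_add, eval_sub, eval_pow, eval_C, eval_X, eval_one,
        pow_zero, pow_one]
      push_cast
      field_simp
      linear_combination sq_add_one_eq_two_re_mul hz
  | succ k ih =>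
    obtain ⟨τ, hτ, heq⟩ := ih
    refine ⟨2 * τ ^ 2 - 1, ?_, ?_⟩
    · rw [abs_le]
      constructor <;> nlinarith [abs_le.mp hτ]
    · simp only [arcPoly, eval_sub, eval_mul, eval_pow, eval_C, eval_X, heq, pow_succ 2 k,
        pow_mul]
      push_cast
      ring

lemma norm_eval_le_one {m : ℝ} (hm : -1 < m) {z : ℂ} (hz : ‖z‖ = 1) (hre : z.re ≤ m)
    (k : ℕ) : ‖(arcPoly m k).eval z‖ ≤ 1 := by
  obtain ⟨τ, hτ, heq⟩ := exists_eval_eq_pow_mul_real hm hz hre k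
  rwa [heq, norm_mul, norm_pow, hz, one_pow, one_mul, Complex.norm_real, Real.norm_eq_abs]

end arcPoly

lemma exists_poly_eval_zero_eq_one_norm_le_off_ball {t : ℂ} (ht : ‖t‖ = 1) {ε : ℝ}
    (hε : 0 < ε) : ∃ P : ℂ[X], P.eval 0 = 1 ∧ ∃ r : ℝ, 0 < r ∧ r < 1 ∧
      ∀ z : ℂ, ‖z‖ = 1 → z ∉ Metric.ball t ε → ‖P.eval z‖ ≤ r := by
  set δ := min ε 1
  have hδ : 0 < δ := lt_min hε one_pos
  have hδ1 : δ ≤ 1 := min_le_right ε 1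
  set m := 1 - δ ^ 2 / 2 with hm_def
  have hm : -1 < m := by nlinarith
  have hq : 1 < 2 / (m + 1) := by rw [lt_div_iff₀ (by linarith), hm_def]; nlinarith
  obtain ⟨N, hN⟩ := pow_unbounded_of_one_lt 2 hq
  set b := 1 / 2 * (2 / (m + 1)) ^ 2 ^ N
  have hb : 1 < b := by
    have := pow_le_pow_right₀ hq.le (Nat.lt_two_pow_self (n := N)).le
    simp only [b]
    linarith
  have hb0 : 0 < b := one_pos.trans hb
  refine ⟨C ((b : ℂ)⁻¹) * (arcPoly m N).comp (C ((starRingEnd ℂ) t) * X), ?_,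
    b⁻¹, inv_pos.mpr hb0, inv_lt_one_of_one_lt₀ hb, fun z hz hzt => ?_⟩
  · have hb' : (b : ℂ) ≠ 0 := by exact_mod_cast hb0.ne'
    simp only [eval_mul, eval_C, eval_comp, eval_X, mul_zero, arcPoly.eval_zero]
    exact inv_mul_cancel₀ hb'
  set u := (starRingEnd ℂ) t * z with hu_def
  have hu : ‖u‖ = 1 := by simp [u, ht, hz]
  have hdist : δ ≤ ‖u - 1‖ := by
    have hu1 : u - 1 = (starRingEnd ℂ) t * (z - t) := by
      rw [hu_def, mul_sub, mul_comm _ t, Complex.mul_conj, Complex.normSq_eq_norm_sq, ht]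
      norm_num
    rw [hu1, norm_mul, RCLike.norm_conj, ht, one_mul, ← dist_eq_norm]
    exact (min_le_left ε 1).trans (not_lt.mp hzt)
  have hfu := arcPoly.norm_eval_le_one hm hu (re_le_of_le_norm_sub_one hu hδ.le hdist) N
  simp only [eval_mul, eval_C, eval_comp, eval_X, ← hu_def, norm_mul, norm_inv,
    Complex.norm_real, Real.norm_eq_abs, abs_of_pos hb0]
  exact mul_le_of_le_one_right (inv_pos.mpr hb0).le hfu

/-- If `ρ` is a finite positive measure on the unit circle whose
closed support is not all of `𝕋` (i.e. some ball centered on the circle is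
`ρ`-null), then `e_n(ρ) ≤ C e^{-cn}` for all `n ≥ 1`, for some `C, c > 0`. -/
theorem stmt2 (ρ : Measure ℂ) [IsFiniteMeasure ρ]
    (hcirc : ρ {z : ℂ | ‖z‖ ≠ 1} = 0)
    (hgap : ∃ t : ℂ, ‖t‖ = 1 ∧ ∃ ε > 0, ρ (Metric.ball t ε) = 0) :
    ∃ C > 0, ∃ c > 0, ∀ n : ℕ, 1 ≤ n →
      eN ρ n ≤ C * Real.exp (-c * n) := by
  obtain ⟨t, ht, ε, hε, hnull⟩ := hgap
  obtain ⟨P, hP0, r, hr0, hr1, hPr⟩ := exists_poly_eval_zero_eq_one_norm_le_off_ball ht hε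
  have hae : ∀ᵐ z ∂ρ, ‖P.eval z‖ ≤ r := by
    have hcirc' : ∀ᵐ z ∂ρ, ‖z‖ = 1 := by simpa [ae_iff] using hcirc
    have hball : ∀ᵐ z ∂ρ, z ∉ Metric.ball t ε := measure_eq_zero_iff_ae_notMem.mp hnull
    filter_upwards [hcirc', hball] with z hz hzt using hPr z hz hzt
  obtain ⟨C, hC, c, hc, hbound⟩ := exists_exp_bound_eN_of_ae_norm_le ρ hP0 hr0 hr1 hae
  exact ⟨C, hC, c, hc, fun n _ => hbound n⟩
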